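/- arXiv:0811.3715 — 9 statements merged into one kernel-verified Lean document; each statement's English description precedes it below -/
import Mathlib

section
/- Let (V, ω) be a finite-dimensional presymplectic vector space and W ⊆ V a linear subspace. Then dim W + dim W^ω ≤ dim V + dim V^ω. -/
open Module

/-- The `ω`-complement `W^ω = {v ∈ V | ω(v, w) = 0 for all w ∈ W}` of a subspace `W`
of a presymplectic vector space `(V, ω)`. -/
def omegaPerp {V : Type*} [AddCommGroup V] [Module ℝ V]
    (ω : V →ₗ[ℝ] V →ₗ[ℝ] ℝ) (W : Submodule ℝ V) : Submodule ℝ V where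
  carrier := {v : V | ∀ w ∈ W, ω v w = 0}
  add_mem' := by
    intro a b ha hb w hw
    simp [map_add, LinearMap.add_apply, ha w hw, hb w hw]
  zero_mem' := by
    intro w hw
    simp
  smul_mem' := by
    intro c a ha w hw
    simp [map_smul, LinearMap.smul_apply, ha w hw]

lemma omegaPerp_eq_orthogonal {V : Type*} [AddCommGroup V] [Module ℝ V]
    (ω : V →ₗ[ℝ] V →ₗ[ℝ] ℝ) (halt : ∀ v : V, ω v v = 0) (W : Submodule ℝ V) :
    omegaPerp ω W = LinearMap.BilinForm.orthogonal ω W := by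
  have hskew : ∀ x y : V, ω x y = - ω y x := by
    intro x y
    have h := halt (x + y)
    simp only [map_add, LinearMap.add_apply, halt x, halt y] at h
    linarith
  ext v
  constructor
  · intro hv w hw
    have := hv w hw
    change ω w v = 0
    rw [hskew w v, this, neg_zero]
  · intro hv w hw
    have := hv w hw
    change ω w v = 0 at this
    rw [hskew v w, this, neg_zero]

/-- Let `(V, ω)` be a finite-dimensional presymplectic vector space and `W ⊆ V` a linear
subspace. Then `dim W + dim W^ω ≤ dim V + dim V^ω`. -/
theorem stmt0 {V : Type*} [AddCommGroup V] [Module ℝ V] [FiniteDimensional ℝ V]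
    (ω : V →ₗ[ℝ] V →ₗ[ℝ] ℝ) (halt : ∀ v : V, ω v v = 0)
    (W : Submodule ℝ V) :
    finrank ℝ W + finrank ℝ (omegaPerp ω W)
      ≤ finrank ℝ V + finrank ℝ (omegaPerp ω (⊤ : Submodule ℝ V)) := by
  have hrefl : (ω : LinearMap.BilinForm ℝ V).IsRefl := by
    intro x y h
    have hx := halt (x + y)
    simp only [map_add, LinearMap.add_apply, halt x, halt y] at hx
    linarith
  rw [omegaPerp_eq_orthogonal ω halt, omegaPerp_eq_orthogonal ω halt,
    LinearMap.BilinForm.finrank_add_finrank_orthogonal hrefl W]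
  gcongr
  exact Submodule.finrank_mono inf_le_right
end

section
/- Let (V, ω) and (V', ω') be finite-dimensional presymplectic vector spaces and Ψ : V' → V a linear map such that ω'(u, v) = ω(Ψu, Ψv) for all u, v ∈ V'. Then dim V' + dim V'^{ω'} ≤ dim V + dim V^ω + dim(ker Ψ) + dim(ker Ψ ∩ V'^{ω'}). -/
open Module

/-- Let `(V, ω)` and `(V', ω')` be finite-dimensional presymplectic vector spaces and
`Ψ : V' → V` a linear map such that `ω'(u, v) = ω(Ψu, Ψv)` for all `u, v ∈ V'`. Then
`dim V' + dim V'^{ω'} ≤ dim V + dim V^ω + dim (ker Ψ) + dim (ker Ψ ∩ V'^{ω'})`. -/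
theorem stmt2 {V : Type*} [AddCommGroup V] [Module ℝ V] [FiniteDimensional ℝ V]
    {V' : Type*} [AddCommGroup V'] [Module ℝ V'] [FiniteDimensional ℝ V']
    (ω : V →ₗ[ℝ] V →ₗ[ℝ] ℝ) (halt : ∀ v : V, ω v v = 0)
    (ω' : V' →ₗ[ℝ] V' →ₗ[ℝ] ℝ) (halt' : ∀ v : V', ω' v v = 0)
    (Ψ : V' →ₗ[ℝ] V) (hΨ : ∀ u v : V', ω' u v = ω (Ψ u) (Ψ v)) :
    finrank ℝ V' + finrank ℝ (omegaPerp ω' (⊤ : Submodule ℝ V'))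
      ≤ finrank ℝ V + finrank ℝ (omegaPerp ω (⊤ : Submodule ℝ V))
        + finrank ℝ (LinearMap.ker Ψ)
        + finrank ℝ (LinearMap.ker Ψ ⊓ omegaPerp ω' (⊤ : Submodule ℝ V') : Submodule ℝ V') := by
  have hrefl : LinearMap.BilinForm.IsRefl ω := by
    intro u v h
    have hskew : ω v u = - ω u v := by
      have := halt (u + v)
      simp only [map_add, LinearMap.add_apply, halt u, halt v] at this
      linarith
    rw [hskew, h, neg_zero]
  set R' : Submodule ℝ V' := omegaPerp ω' (⊤ : Submodule ℝ V') with hR'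
  set W : Submodule ℝ V := LinearMap.range Ψ with hW
  -- the restriction of Ψ to R'
  set Φ : R' →ₗ[ℝ] V := Ψ.comp R'.subtype with hΦ
  -- kernel of Φ
  have hker : finrank ℝ (LinearMap.ker Φ) =
      finrank ℝ (LinearMap.ker Ψ ⊓ R' : Submodule ℝ V') := by
    have h1 : LinearMap.ker Φ = Submodule.comap R'.subtype (LinearMap.ker Ψ) := by
      rw [hΦ, LinearMap.ker_comp]
    rw [h1, ← Submodule.finrank_map_subtype_eq R', Submodule.map_comap_subtype, inf_comm]
  -- range of Φ lands in orthogonal of W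
  have hrange : LinearMap.range Φ ≤ LinearMap.BilinForm.orthogonal ω W := by
    rintro _ ⟨⟨x, hx⟩, rfl⟩
    intro w hw
    obtain ⟨u, rfl⟩ := hw
    show ω (Ψ u) (Ψ x) = 0
    rw [← hΨ]
    have hx' : ∀ z ∈ (⊤ : Submodule ℝ V'), ω' x z = 0 := hx
    have hskew : ω' u x = - ω' x u := by
      have := halt' (u + x)
      simp only [map_add, LinearMap.add_apply, halt' u, halt' x] at this
      linarith
    rw [hskew, hx' u trivial, neg_zero]
  have hR'dim : finrank ℝ R' ≤ finrank ℝ (LinearMap.BilinForm.orthogonal ω W)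
      + finrank ℝ (LinearMap.ker Ψ ⊓ R' : Submodule ℝ V') := by
    have := LinearMap.finrank_range_add_finrank_ker Φ
    have h2 : finrank ℝ (LinearMap.range Φ)
        ≤ finrank ℝ (LinearMap.BilinForm.orthogonal ω W) :=
      Submodule.finrank_mono hrange
    omega
  have horth := LinearMap.BilinForm.finrank_add_finrank_orthogonal hrefl W
  have hWrad : finrank ℝ (W ⊓ LinearMap.BilinForm.orthogonal ω ⊤ : Submodule ℝ V)
      ≤ finrank ℝ (LinearMap.BilinForm.orthogonal ω (⊤ : Submodule ℝ V)) :=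
    Submodule.finrank_mono inf_le_right
  have hrn : finrank ℝ W + finrank ℝ (LinearMap.ker Ψ) = finrank ℝ V' := by
    rw [hW]; exact LinearMap.finrank_range_add_finrank_ker Ψ
  have hperp : finrank ℝ (omegaPerp ω (⊤ : Submodule ℝ V))
      = finrank ℝ (LinearMap.BilinForm.orthogonal ω (⊤ : Submodule ℝ V)) := by
    rw [omegaPerp_eq_orthogonal ω halt]
  rw [hperp]
  omega
end

section
/- Let (V, ω) and (V', ω') be finite-dimensional presymplectic vector spaces and Ψ : V' → V a linear map with ω'(u, v) = ω(Ψu, Ψv) for all u, v ∈ V'. Then the image Ψ(V') is a coisotropic subspace of (V, ω) if and only if dim V' + dim V'^{ω'} = dim V + dim V^ω + dim(ker Ψ) + dim(ker Ψ ∩ V'^{ω'}). -/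
open Module

lemma mem_omegaPerp {V : Type*} [AddCommGroup V] [Module ℝ V]
    (ω : V →ₗ[ℝ] V →ₗ[ℝ] ℝ) (W : Submodule ℝ V) (v : V) :
    v ∈ omegaPerp ω W ↔ ∀ w ∈ W, ω v w = 0 := Iff.rfl

/-- rank-nullity for `comap`. -/
lemma finrank_comap_eq' {V V' : Type*} [AddCommGroup V] [Module ℝ V]
    [AddCommGroup V'] [Module ℝ V'] [FiniteDimensional ℝ V'] (f : V' →ₗ[ℝ] V)
    (p : Submodule ℝ V) :
    finrank ℝ (p.comap f) =
      finrank ℝ (LinearMap.range f ⊓ p : Submodule ℝ V) + finrank ℝ (LinearMap.ker f) := by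
  have h := LinearMap.finrank_range_add_finrank_ker (f.domRestrict (p.comap f))
  rw [LinearMap.range_domRestrict, Submodule.map_comap_eq, LinearMap.ker_domRestrict] at h
  have hker : LinearMap.ker f ≤ p.comap f := by
    intro x hx
    simp only [Submodule.mem_comap, LinearMap.mem_ker.mp hx]
    exact p.zero_mem
  rw [(Submodule.comapSubtypeEquivOfLe hker).finrank_eq] at h
  exact h.symm

/-- rank-nullity for `Submodule.map`. -/
lemma finrank_map_add_eq' {V V' : Type*} [AddCommGroup V] [Module ℝ V]
    [AddCommGroup V'] [Module ℝ V'] [FiniteDimensional ℝ V'] (f : V' →ₗ[ℝ] V)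
    (W : Submodule ℝ V') :
    finrank ℝ (W.map f) + finrank ℝ (W ⊓ LinearMap.ker f : Submodule ℝ V')
      = finrank ℝ W := by
  have h := LinearMap.finrank_range_add_finrank_ker (f.domRestrict W)
  rw [LinearMap.range_domRestrict, LinearMap.ker_domRestrict] at h
  have he : Submodule.comap W.subtype (LinearMap.ker f)
      = Submodule.comap W.subtype (W ⊓ LinearMap.ker f) := by
    ext x
    simp [x.2]
  rw [he, (Submodule.comapSubtypeEquivOfLe (inf_le_left : W ⊓ LinearMap.ker f ≤ W)).finrank_eq]
    at h
  exact h

/-- Let `(V, ω)` and `(V', ω')` be finite-dimensional presymplectic vector spaces and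
`Ψ : V' → V` a linear map with `ω'(u, v) = ω(Ψu, Ψv)`. Then `Ψ(V')` is a coisotropic
subspace of `(V, ω)` if and only if
`dim V' + dim V'^{ω'} = dim V + dim V^ω + dim (ker Ψ) + dim (ker Ψ ∩ V'^{ω'})`. -/
theorem stmt3 {V : Type*} [AddCommGroup V] [Module ℝ V] [FiniteDimensional ℝ V]
    {V' : Type*} [AddCommGroup V'] [Module ℝ V'] [FiniteDimensional ℝ V']
    (ω : V →ₗ[ℝ] V →ₗ[ℝ] ℝ) (halt : ∀ v : V, ω v v = 0)
    (ω' : V' →ₗ[ℝ] V' →ₗ[ℝ] ℝ) (halt' : ∀ v : V', ω' v v = 0)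
    (Ψ : V' →ₗ[ℝ] V) (hΨ : ∀ u v : V', ω' u v = ω (Ψ u) (Ψ v)) :
    omegaPerp ω (LinearMap.range Ψ) ≤ LinearMap.range Ψ ↔
      finrank ℝ V' + finrank ℝ (omegaPerp ω' (⊤ : Submodule ℝ V'))
        = finrank ℝ V + finrank ℝ (omegaPerp ω (⊤ : Submodule ℝ V))
          + finrank ℝ (LinearMap.ker Ψ)
          + finrank ℝ (LinearMap.ker Ψ ⊓ omegaPerp ω' (⊤ : Submodule ℝ V') : Submodule ℝ V') := by
  set W := LinearMap.range Ψ with hW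
  set P := omegaPerp ω W with hP
  set R := omegaPerp ω (⊤ : Submodule ℝ V) with hRdef
  set R' := omegaPerp ω' (⊤ : Submodule ℝ V') with hR'def
  set K := LinearMap.ker Ψ with hK
  -- skew-symmetry of ω
  have hskew : ∀ u v : V, ω u v = - ω v u := by
    intro u v
    have h := halt (u + v)
    simp only [map_add, LinearMap.add_apply, halt u, halt v] at h
    linarith
  -- R' = comap Ψ P
  have hR' : R' = P.comap Ψ := by
    ext u
    simp only [hR'def, hP, mem_omegaPerp, Submodule.mem_comap, Submodule.mem_top, true_implies]
    constructor
    · rintro h w ⟨v, rfl⟩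
      rw [← hΨ]; exact h v
    · intro h v
      rw [hΨ]
      exact h (Ψ v) ⟨v, rfl⟩
  -- K ≤ R'
  have hKR' : K ≤ R' := by
    intro u hu
    intro v _
    rw [hΨ, LinearMap.mem_ker.mp hu]
    simp
  have hKinf : (K ⊓ R' : Submodule ℝ V') = K := inf_eq_left.mpr hKR'
  -- (a) finrank R' = finrank (W ⊓ P) + finrank K
  have ha : finrank ℝ R' = finrank ℝ (W ⊓ P : Submodule ℝ V) + finrank ℝ K := by
    rw [hR']; exact finrank_comap_eq' Ψ P
  -- (c) finrank (W.map ω) + finrank P = finrank V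
  have hc : finrank ℝ (W.map ω) + finrank ℝ P = finrank ℝ V := by
    have hPco : P = (W.map ω).dualCoannihilator := by
      ext v
      simp only [hP, mem_omegaPerp, Submodule.mem_dualCoannihilator]
      constructor
      · rintro h φ ⟨w, hw, rfl⟩
        have := h w hw
        rw [hskew] at this
        linarith
      · intro h w hw
        have := h (ω w) ⟨w, hw, rfl⟩
        rw [hskew]
        simpa using this
    rw [hPco]
    exact Subspace.finrank_add_finrank_dualCoannihilator_eq (W.map ω)
  -- R = ker ω
  have hRker : R = LinearMap.ker ω := by
    ext v
    simp only [hRdef, mem_omegaPerp, Submodule.mem_top, true_implies, LinearMap.mem_ker]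
    constructor
    · intro h; ext w; simpa using h w
    · intro h w; rw [h]; simp
  -- (d) finrank (W.map ω) + finrank (W ⊓ R) = finrank W
  have hd : finrank ℝ (W.map ω) + finrank ℝ (W ⊓ R : Submodule ℝ V) = finrank ℝ W := by
    rw [hRker]; exact finrank_map_add_eq' ω W
  -- (e) rank-nullity for Ψ
  have he : finrank ℝ W + finrank ℝ K = finrank ℝ V' :=
    LinearMap.finrank_range_add_finrank_ker Ψ
  -- (f) R ≤ P
  have hf : R ≤ P := by
    intro v hv w _
    exact hv w trivial
  rw [hKinf]
  constructor
  · intro hco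
    have h1 : (W ⊓ P : Submodule ℝ V) = P := inf_eq_right.mpr hco
    have h2 : (W ⊓ R : Submodule ℝ V) = R := inf_eq_right.mpr (le_trans hf hco)
    have ha' : finrank ℝ R' = finrank ℝ P + finrank ℝ K := by rw [ha, h1]
    have h2' : finrank ℝ (W ⊓ R : Submodule ℝ V) = finrank ℝ R := by rw [h2]
    omega
  · intro heq
    rw [ha] at heq
    have h1 : finrank ℝ (W ⊓ P : Submodule ℝ V) ≤ finrank ℝ P :=
      Submodule.finrank_mono inf_le_right
    have h2 : finrank ℝ (W ⊓ R : Submodule ℝ V) ≤ finrank ℝ R :=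
      Submodule.finrank_mono inf_le_right
    have h3 : finrank ℝ (W ⊓ P : Submodule ℝ V) = finrank ℝ P := by omega
    have h4 : (W ⊓ P : Submodule ℝ V) = P :=
      Submodule.eq_of_le_of_finrank_eq inf_le_right h3
    rw [← h4]
    exact inf_le_left
end

section
/- Let (V, ω) and (V', ω') be presymplectic vector spaces (not necessarily finite-dimensional) and Ψ : V' → V a linear map with ω'(u, v) = ω(Ψu, Ψv) for all u, v ∈ V'. Then Ψ(V'^{ω'}) ⊆ (Ψ(V'))^ω, and the subspace Ψ(V') ⊆ V is coisotropic if and only if Ψ(V'^{ω'}) = (Ψ(V'))^ω. -/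
open Module

/-- Let `(V, ω)` and `(V', ω')` be presymplectic vector spaces (not necessarily
finite-dimensional) and `Ψ : V' → V` a linear map with `ω'(u, v) = ω(Ψu, Ψv)`. Then
`Ψ(V'^{ω'}) ⊆ (Ψ V')^ω`, and `Ψ(V')` is coisotropic iff `Ψ(V'^{ω'}) = (Ψ V')^ω`. -/
theorem stmt4 {V : Type*} [AddCommGroup V] [Module ℝ V]
    {V' : Type*} [AddCommGroup V'] [Module ℝ V']
    (ω : V →ₗ[ℝ] V →ₗ[ℝ] ℝ) (halt : ∀ v : V, ω v v = 0)
    (ω' : V' →ₗ[ℝ] V' →ₗ[ℝ] ℝ) (halt' : ∀ v : V', ω' v v = 0)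
    (Ψ : V' →ₗ[ℝ] V) (hΨ : ∀ u v : V', ω' u v = ω (Ψ u) (Ψ v)) :
    (omegaPerp ω' (⊤ : Submodule ℝ V')).map Ψ ≤ omegaPerp ω (LinearMap.range Ψ) ∧
      (omegaPerp ω (LinearMap.range Ψ) ≤ LinearMap.range Ψ ↔
        (omegaPerp ω' (⊤ : Submodule ℝ V')).map Ψ = omegaPerp ω (LinearMap.range Ψ)) := by
  have hsub : (omegaPerp ω' (⊤ : Submodule ℝ V')).map Ψ ≤ omegaPerp ω (LinearMap.range Ψ) := by
    rintro x ⟨u, hu, rfl⟩ w ⟨w', rfl⟩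
    rw [← hΨ]
    exact hu w' trivial
  refine ⟨hsub, ⟨fun hco => le_antisymm hsub fun v hv => ?_, fun h => h ▸ fun x hx => ?_⟩⟩
  · obtain ⟨u, rfl⟩ := hco hv
    exact ⟨u, fun w _ => by rw [hΨ]; exact hv (Ψ w) ⟨w, rfl⟩, rfl⟩
  · obtain ⟨u, _, rfl⟩ := hx
    exact ⟨u, rfl⟩
end

section
/- Let t ≥ 0 and let x : ℝ → ℝ be continuously differentiable on [0, t] with ∫₀ᵗ x(s) ds = 0. Then ∫₀ᵗ |x(s)| ds ≤ t · ∫₀ᵗ |x'(s)| ds. -/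
/-- Let `t ≥ 0` and let `x : ℝ → ℝ` be continuously differentiable on `[0, t]` with
`∫₀ᵗ x(s) ds = 0`. Then `∫₀ᵗ |x(s)| ds ≤ t * ∫₀ᵗ |x'(s)| ds`. -/
theorem stmt7 (t : ℝ) (ht : 0 ≤ t) (x x' : ℝ → ℝ)
    (hderiv : ∀ s ∈ Set.Icc (0 : ℝ) t, HasDerivWithinAt x (x' s) (Set.Icc (0 : ℝ) t) s)
    (hcont : ContinuousOn x' (Set.Icc (0 : ℝ) t))
    (hint : ∫ s in (0 : ℝ)..t, x s = 0) :
    ∫ s in (0 : ℝ)..t, |x s| ≤ t * ∫ s in (0 : ℝ)..t, |x' s| := by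
  rcases ht.eq_or_lt with rfl | htpos
  · simp
  have huIcc : Set.uIcc (0 : ℝ) t = Set.Icc 0 t := Set.uIcc_of_le ht
  have hxc : ContinuousOn x (Set.Icc 0 t) := fun s hs => (hderiv s hs).continuousWithinAt
  have hxint : IntervalIntegrable x MeasureTheory.volume 0 t :=
    (hxc.mono huIcc.subset).intervalIntegrable
  have hx'int : IntervalIntegrable x' MeasureTheory.volume 0 t :=
    (hcont.mono huIcc.subset).intervalIntegrable
  -- derivative of x at interior points
  have hderiv' : ∀ u ∈ Set.Ioo (0 : ℝ) t, HasDerivAt x (x' u) u := by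
    intro u hu
    exact (hderiv u (Set.Ioo_subset_Icc_self hu)).hasDerivAt
      (Icc_mem_nhds hu.1 hu.2)
  -- find c with x c = 0, via Rolle on the primitive
  set F : ℝ → ℝ := fun s => ∫ u in (0:ℝ)..s, x u with hF
  have hFc : ContinuousOn F (Set.Icc 0 t) := by
    rw [← huIcc]
    exact intervalIntegral.continuousOn_primitive_interval' hxint Set.left_mem_uIcc
  have hFd : ∀ u ∈ Set.Ioo (0 : ℝ) t, HasDerivAt F (x u) u := by
    intro u hu
    have hxi : IntervalIntegrable x MeasureTheory.volume 0 u :=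
      hxint.mono_set (by rw [huIcc, Set.uIcc_of_le hu.1.le]
                         exact Set.Icc_subset_Icc le_rfl hu.2.le)
    have hcu : ContinuousAt x u :=
      hxc.continuousAt (Icc_mem_nhds hu.1 hu.2)
    exact intervalIntegral.integral_hasDerivAt_right hxi
      ⟨Set.Ioo 0 t, Ioo_mem_nhds hu.1 hu.2,
        ((hxc.mono Set.Ioo_subset_Icc_self).aestronglyMeasurable measurableSet_Ioo)⟩ hcu
  have hF0 : F 0 = 0 := by simp [hF]
  have hFt : F t = 0 := hint
  obtain ⟨c, hc, hc0⟩ := exists_hasDerivAt_eq_slope F x htpos hFc hFd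
  have hxceq : x c = 0 := by
    have := hc0
    rw [hFt, hF0] at this
    simpa using this
  have hcIcc : c ∈ Set.Icc (0:ℝ) t := Set.Ioo_subset_Icc_self hc
  -- pointwise bound: |x s| ≤ ∫₀ᵗ |x' u|
  have key : ∀ s ∈ Set.Icc (0:ℝ) t, |x s| ≤ ∫ u in (0:ℝ)..t, |x' u| := by
    intro s hs
    have hftc : ∫ u in c..s, x' u = x s - x c := by
      rcases le_total c s with h | h
      · exact intervalIntegral.integral_eq_sub_of_hasDeriv_right_of_le h
          (hxc.mono (Set.Icc_subset_Icc hcIcc.1 hs.2))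
          (fun u hu => ((hderiv' u ⟨lt_of_le_of_lt hcIcc.1 hu.1,
            lt_of_lt_of_le hu.2 hs.2⟩).hasDerivWithinAt))
          (hx'int.mono_set (by rw [huIcc, Set.uIcc_of_le h]
                               exact Set.Icc_subset_Icc hcIcc.1 hs.2))
      · rw [intervalIntegral.integral_symm]
        rw [intervalIntegral.integral_eq_sub_of_hasDeriv_right_of_le h
          (hxc.mono (Set.Icc_subset_Icc hs.1 hcIcc.2))
          (fun u hu => ((hderiv' u ⟨lt_of_le_of_lt hs.1 hu.1,
            lt_of_lt_of_le hu.2 hcIcc.2⟩).hasDerivWithinAt))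
          (hx'int.mono_set (by rw [huIcc, Set.uIcc_of_le h]
                               exact Set.Icc_subset_Icc hs.1 hcIcc.2))]
        ring
    have h1 : |x s| = |∫ u in c..s, x' u| := by rw [hftc, hxceq, sub_zero]
    rw [h1]
    calc |∫ u in c..s, x' u| ≤ abs (∫ u in c..s, |x' u|) := by
          simpa using intervalIntegral.norm_integral_le_abs_integral_norm
            (f := x') (a := c) (b := s) (μ := MeasureTheory.volume)
      _ ≤ abs (∫ u in (0:ℝ)..t, |x' u|) := by
          apply intervalIntegral.abs_integral_mono_interval
          · rw [Set.uIoc_of_le ht, Set.uIoc]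
            exact Set.Ioc_subset_Ioc (le_min hcIcc.1 hs.1) (max_le hcIcc.2 hs.2)
          · filter_upwards with u using abs_nonneg _
          · exact hx'int.abs
      _ = ∫ u in (0:ℝ)..t, |x' u| := by
          rw [abs_of_nonneg]
          apply intervalIntegral.integral_nonneg ht
          intro u _; exact abs_nonneg _
  have habsint : IntervalIntegrable (fun s => |x s|) MeasureTheory.volume 0 t := hxint.abs
  calc ∫ s in (0:ℝ)..t, |x s| ≤ ∫ s in (0:ℝ)..t, (∫ u in (0:ℝ)..t, |x' u|) :=
        intervalIntegral.integral_mono_on ht habsint intervalIntegrable_const key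
    _ = t * ∫ u in (0:ℝ)..t, |x' u| := by
        rw [intervalIntegral.integral_const]; simp
end

section
/- Let E be a real normed vector space, t ≥ 0, and let x : ℝ → E be continuously differentiable on [0, t] with ∫₀ᵗ x(s) ds = 0. Then ∫₀ᵗ ‖x(s)‖ ds ≤ t · ∫₀ᵗ ‖x'(s)‖ ds. -/
/-- Let `E` be a (complete) real normed vector space, `t ≥ 0`, and let `x : ℝ → E` be
continuously differentiable on `[0, t]` with Bochner integral `∫₀ᵗ x(s) ds = 0`.
Then `∫₀ᵗ ‖x(s)‖ ds ≤ t * ∫₀ᵗ ‖x'(s)‖ ds`. -/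
theorem stmt8 {E : Type*} [NormedAddCommGroup E] [NormedSpace ℝ E] [CompleteSpace E]
    (t : ℝ) (ht : 0 ≤ t) (x x' : ℝ → E)
    (hderiv : ∀ s ∈ Set.Icc (0 : ℝ) t, HasDerivWithinAt x (x' s) (Set.Icc (0 : ℝ) t) s)
    (hcont : ContinuousOn x' (Set.Icc (0 : ℝ) t))
    (hint : ∫ s in (0 : ℝ)..t, x s = 0) :
    ∫ s in (0 : ℝ)..t, ‖x s‖ ≤ t * ∫ s in (0 : ℝ)..t, ‖x' s‖ := by
  rcases ht.eq_or_lt with rfl | htpos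
  · simp
  set C : ℝ := ∫ s in (0 : ℝ)..t, ‖x' s‖ with hC
  have hxc : ContinuousOn x (Set.Icc (0 : ℝ) t) :=
    fun s hs => (hderiv s hs).continuousWithinAt
  have hx'int : IntervalIntegrable x' MeasureTheory.volume 0 t :=
    (hcont.mono (by rw [Set.uIcc_of_le ht])).intervalIntegrable
  have hnx'int : IntervalIntegrable (fun s => ‖x' s‖) MeasureTheory.volume 0 t :=
    hx'int.norm
  -- FTC on subintervals
  have hftc : ∀ a ∈ Set.Icc (0:ℝ) t, ∀ b ∈ Set.Icc (0:ℝ) t, a ≤ b →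
      x b - x a = ∫ s in a..b, x' s := by
    intro a ha b hb hab
    have hsub : Set.Icc a b ⊆ Set.Icc (0:ℝ) t := Set.Icc_subset_Icc ha.1 hb.2
    refine (intervalIntegral.integral_eq_sub_of_hasDeriv_right_of_le hab
      (hxc.mono hsub) ?_ ((hx'int.mono_set ?_))).symm
    · intro y hy
      have hy' : y ∈ Set.Ioo (0:ℝ) t :=
        ⟨lt_of_le_of_lt ha.1 hy.1, lt_of_lt_of_le hy.2 hb.2⟩
      exact ((hderiv y ⟨hy'.1.le, hy'.2.le⟩).hasDerivAt
        (Icc_mem_nhds hy'.1 hy'.2)).hasDerivWithinAt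
    · rw [Set.uIcc_of_le hab, Set.uIcc_of_le ht]; exact hsub
  -- norm of increments bounded by C
  have hincr : ∀ a ∈ Set.Icc (0:ℝ) t, ∀ b ∈ Set.Icc (0:ℝ) t, ‖x b - x a‖ ≤ C := by
    have key : ∀ a ∈ Set.Icc (0:ℝ) t, ∀ b ∈ Set.Icc (0:ℝ) t, a ≤ b → ‖x b - x a‖ ≤ C := by
      intro a ha b hb hab
      rw [hftc a ha b hb hab]
      calc ‖∫ s in a..b, x' s‖ ≤ ∫ s in a..b, ‖x' s‖ :=
            intervalIntegral.norm_integral_le_integral_norm hab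
        _ ≤ C := by
            refine intervalIntegral.integral_mono_interval ha.1 hab hb.2 ?_ hnx'int
            exact Filter.Eventually.of_forall fun s => norm_nonneg _
    intro a ha b hb
    rcases le_total a b with hab | hba
    · exact key a ha b hb hab
    · rw [← norm_neg, neg_sub]; exact key b hb a ha hba
  -- pointwise bound ‖x s‖ ≤ C
  have hbound : ∀ s ∈ Set.Icc (0:ℝ) t, ‖x s‖ ≤ C := by
    intro s hs
    have h1 : (t : ℝ) • x s = ∫ σ in (0:ℝ)..t, (x s - x σ) := by
      have hxint : IntervalIntegrable x MeasureTheory.volume 0 t :=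
        (hxc.mono (by rw [Set.uIcc_of_le ht])).intervalIntegrable
      rw [intervalIntegral.integral_sub (intervalIntegrable_const) hxint, hint,
        intervalIntegral.integral_const, sub_zero, sub_zero]
    have h2 : ‖∫ σ in (0:ℝ)..t, (x s - x σ)‖ ≤ C * |t - 0| := by
      refine intervalIntegral.norm_integral_le_of_norm_le_const ?_
      intro σ hσ
      rw [Set.uIoc_of_le ht] at hσ
      exact hincr σ ⟨hσ.1.le, hσ.2⟩ s hs
    rw [← h1, norm_smul, Real.norm_eq_abs, abs_of_pos htpos, sub_zero,
      abs_of_pos htpos] at h2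
    exact le_of_mul_le_mul_left (by linarith [h2]) htpos
  -- integrate the bound
  calc ∫ s in (0:ℝ)..t, ‖x s‖ ≤ ∫ s in (0:ℝ)..t, C := by
        refine intervalIntegral.integral_mono_on ht
          ((hxc.norm.mono (by rw [Set.uIcc_of_le ht])).intervalIntegrable)
          intervalIntegrable_const hbound
    _ = t * C := by rw [intervalIntegral.integral_const, smul_eq_mul, sub_zero]
end

section
/- Let E be a finite-dimensional real normed vector space, F : E → E a continuously differentiable map, t > 0, and y : ℝ → E a map which is differentiable on [0, t] with y'(s) = F(y(s)) for every s ∈ [0, t]. Let L ≥ 0 satisfy t·L < 1 and assume the operator norm of the derivative DF(y(s)) is at most L for every s ∈ [0, t]. If y(t) = y(0), then y is constant on [0, t] (equivalently, F(y(0)) = 0 and y(s) = y(0) for all s ∈ [0, t]). -/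
/-- Fast periodic orbits of a `C¹` vector field are constant: if `F : E → E` is `C¹`,
`y` solves `y' = F ∘ y` on `[0, t]` with `t > 0`, `‖DF(y(s))‖ ≤ L` on `[0, t]`,
`t * L < 1`, and `y(t) = y(0)`, then `y` is constant on `[0, t]` and `F(y(0)) = 0`. -/
theorem stmt11 {E : Type*} [NormedAddCommGroup E] [NormedSpace ℝ E] [FiniteDimensional ℝ E]
    (F : E → E) (hF : ContDiff ℝ 1 F) (t : ℝ) (ht : 0 < t) (y : ℝ → E)
    (hy : ∀ s ∈ Set.Icc (0 : ℝ) t, HasDerivWithinAt y (F (y s)) (Set.Icc (0 : ℝ) t) s)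
    (L : ℝ) (hL : 0 ≤ L) (htL : t * L < 1)
    (hDF : ∀ s ∈ Set.Icc (0 : ℝ) t, ‖fderiv ℝ F (y s)‖ ≤ L)
    (hper : y t = y 0) :
    F (y 0) = 0 ∧ ∀ s ∈ Set.Icc (0 : ℝ) t, y s = y 0 := by
  set I := Set.Icc (0 : ℝ) t with hI
  have h0 : (0 : ℝ) ∈ I := Set.left_mem_Icc.2 ht.le
  have hcy : ContinuousOn y I := fun s hs => (hy s hs).continuousWithinAt
  have hcont : ContinuousOn (fun s => ‖F (y s)‖) I :=
    (hF.continuous.comp_continuousOn hcy).norm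
  obtain ⟨s₀, hs₀, hmax⟩ := (isCompact_Icc).exists_isMaxOn ⟨0, h0⟩ hcont
  set M := ‖F (y s₀)‖ with hM
  have hM0 : 0 ≤ M := norm_nonneg _
  have hle : ∀ s ∈ I, ‖F (y s)‖ ≤ M := fun s hs => hmax hs
  -- derivative of composite g = F ∘ y
  have hg : ∀ u ∈ I, HasDerivWithinAt (fun s => F (y s))
      ((fderiv ℝ F (y u)) (F (y u))) I u := fun u hu =>
    ((hF.differentiable one_ne_zero (y u)).hasFDerivAt).comp_hasDerivWithinAt u (hy u hu)
  have hgbound : ∀ u ∈ I, ‖(fderiv ℝ F (y u)) (F (y u))‖ ≤ L * M := fun u hu =>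
    le_trans ((fderiv ℝ F (y u)).le_opNorm _)
      (mul_le_mul (hDF u hu) (hle u hu) (norm_nonneg _) hL)
  -- g is (L*M)-Lipschitz on I
  have hglip : ∀ s ∈ I, ‖F (y s) - F (y s₀)‖ ≤ L * M * t := by
    intro s hs
    have := (convex_Icc (0:ℝ) t).norm_image_sub_le_of_norm_hasDerivWithin_le
      hg hgbound hs₀ hs
    refine this.trans ?_
    have hd : ‖s - s₀‖ ≤ t := by
      rw [Real.norm_eq_abs, abs_sub_le_iff]
      constructor <;> [linarith [hs.1, hs.2, hs₀.1, hs₀.2]; linarith [hs.1, hs.2, hs₀.1, hs₀.2]]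
    exact mul_le_mul_of_nonneg_left hd (by positivity)
  -- z s = y s - s • F(y s₀)
  set c := F (y s₀) with hc
  have hz : ∀ s ∈ I, HasDerivWithinAt (fun s => y s - s • c) (F (y s) - c) I s := by
    intro s hs
    have h1 : HasDerivWithinAt (fun s : ℝ => s • c) ((1 : ℝ) • c) I s :=
      (hasDerivWithinAt_id s I).smul_const c
    have h2 : HasDerivWithinAt (fun s => y s - s • c) (F (y s) - (1 : ℝ) • c) I s := (hy s hs).sub h1
    rw [one_smul] at h2
    exact h2
  have hzb : ∀ s ∈ I, ‖F (y s) - c‖ ≤ L * M * t := fun s hs => hglip s hs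
  have key : ‖(y t - t • c) - (y 0 - (0:ℝ) • c)‖ ≤ L * M * t * ‖t - 0‖ :=
    (convex_Icc (0:ℝ) t).norm_image_sub_le_of_norm_hasDerivWithin_le hz hzb h0
      (Set.right_mem_Icc.2 ht.le)
  have hkey : t * M ≤ L * M * t * t := by
    have : ‖(y t - t • c) - (y 0 - (0:ℝ) • c)‖ = t * M := by
      rw [hper]
      simp [norm_smul, abs_of_pos ht, hM]
    rw [this] at key
    simpa [Real.norm_eq_abs, abs_of_pos ht] using key
  have hMzero : M = 0 := by
    rcases eq_or_lt_of_le hM0 with h | h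
    · exact h.symm
    · nlinarith [mul_pos (mul_pos ht h) (sub_pos.2 htL)]
  have hFz : ∀ s ∈ I, F (y s) = 0 := by
    intro s hs
    have := hle s hs
    rw [hMzero] at this
    exact norm_le_zero_iff.1 this
  have hconst : ∀ s ∈ I, y s = y 0 := by
    intro s hs
    have hd0 : ∀ u ∈ I, ‖F (y u)‖ ≤ 0 := fun u hu => by rw [hFz u hu]; simp
    have := (convex_Icc (0:ℝ) t).norm_image_sub_le_of_norm_hasDerivWithin_le hy hd0 h0 hs
    have h2 := norm_le_zero_iff.1 (by simpa using this : ‖y s - y 0‖ ≤ 0)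
    exact sub_eq_zero.1 h2
  exact ⟨hFz 0 h0, hconst⟩
end

section
/- Let E₁ and E₂ be finite-dimensional real normed vector spaces, let α : E₁ × E₂ → L(E₁, E₂) be a continuously differentiable map into the space of continuous linear maps from E₁ to E₂, let K ⊆ E₁ × E₂ be a convex set, and let C ≥ 0 be such that the operator norm of the derivative Dα(p) is at most C for every p ∈ K (where E₁ × E₂ carries the supremum norm ‖(v₁,v₂)‖ = max(‖v₁‖,‖v₂‖)). Let t₀ ≥ 0 and let a : [0, t₀] → E₁ and b : [0, t₀] → E₂ be continuously differentiable maps such that (a(t), b(t)) ∈ K for all t ∈ [0, t₀], a(t₀) = a(0), and b'(t) = α(a(t), b(t))(a'(t)) for every t ∈ [0, t₀]. Then ‖b(t₀) − b(0)‖ ≤ 2C · ∫₀^{t₀} ‖(a(t), b(t)) − (a(0), b(0))‖ · ‖(a'(t), b'(t))‖ dt. -/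
/-- Euclidean-chart estimate for paths tangent to a horizontal distribution: if
`b'(t) = α(a(t), b(t))(a'(t))` on `[0, t₀]`, the curve `(a, b)` stays in a convex set `K`
on which `‖Dα‖ ≤ C`, and `a(t₀) = a(0)`, then
`‖b(t₀) − b(0)‖ ≤ 2C ∫₀^{t₀} ‖(a(t), b(t)) − (a(0), b(0))‖ ‖(a'(t), b'(t))‖ dt`. -/
theorem stmt12 {E₁ : Type*} [NormedAddCommGroup E₁] [NormedSpace ℝ E₁] [FiniteDimensional ℝ E₁]
    {E₂ : Type*} [NormedAddCommGroup E₂] [NormedSpace ℝ E₂] [FiniteDimensional ℝ E₂]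
    (α : E₁ × E₂ → (E₁ →L[ℝ] E₂)) (hα : ContDiff ℝ 1 α)
    (K : Set (E₁ × E₂)) (hK : Convex ℝ K)
    (C : ℝ) (hC : 0 ≤ C) (hDα : ∀ p ∈ K, ‖fderiv ℝ α p‖ ≤ C)
    (t₀ : ℝ) (ht₀ : 0 ≤ t₀) (a : ℝ → E₁) (b : ℝ → E₂) (a' : ℝ → E₁) (b' : ℝ → E₂)
    (ha : ∀ t ∈ Set.Icc (0 : ℝ) t₀, HasDerivWithinAt a (a' t) (Set.Icc (0 : ℝ) t₀) t)
    (hb : ∀ t ∈ Set.Icc (0 : ℝ) t₀, HasDerivWithinAt b (b' t) (Set.Icc (0 : ℝ) t₀) t)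
    (ha' : ContinuousOn a' (Set.Icc (0 : ℝ) t₀))
    (hb' : ContinuousOn b' (Set.Icc (0 : ℝ) t₀))
    (hmem : ∀ t ∈ Set.Icc (0 : ℝ) t₀, (a t, b t) ∈ K)
    (haper : a t₀ = a 0)
    (hhor : ∀ t ∈ Set.Icc (0 : ℝ) t₀, b' t = α (a t, b t) (a' t)) :
    ‖b t₀ - b 0‖
      ≤ 2 * C * ∫ t in (0 : ℝ)..t₀,
          ‖((a t, b t) : E₁ × E₂) - (a 0, b 0)‖ * ‖((a' t, b' t) : E₁ × E₂)‖ := by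
  have hIcc : Set.uIcc (0:ℝ) t₀ = Set.Icc 0 t₀ := Set.uIcc_of_le ht₀
  set p : ℝ → E₁ × E₂ := fun t => (a t, b t) with hp
  have hmem0 : (0:ℝ) ∈ Set.Icc (0:ℝ) t₀ := Set.left_mem_Icc.2 ht₀
  have hca : ContinuousOn a (Set.Icc 0 t₀) := fun t ht => (ha t ht).continuousWithinAt
  have hcb : ContinuousOn b (Set.Icc 0 t₀) := fun t ht => (hb t ht).continuousWithinAt
  have hcp : ContinuousOn p (Set.Icc 0 t₀) := hca.prodMk hcb
  have hαc : Continuous α := hα.continuous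
  have hlip : ∀ t ∈ Set.Icc (0:ℝ) t₀, ‖α (p t) - α (p 0)‖ ≤ C * ‖p t - p 0‖ := by
    intro t ht
    exact hK.norm_image_sub_le_of_norm_fderiv_le
      (fun x _ => (hα.differentiable one_ne_zero).differentiableAt) hDα (hmem 0 hmem0) (hmem t ht)
  have hInta' : IntervalIntegrable a' MeasureTheory.volume 0 t₀ :=
    (hIcc ▸ ha' : ContinuousOn a' (Set.uIcc 0 t₀)).intervalIntegrable
  have hIntb' : IntervalIntegrable b' MeasureTheory.volume 0 t₀ :=
    (hIcc ▸ hb' : ContinuousOn b' (Set.uIcc 0 t₀)).intervalIntegrable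
  have hfa : ∫ t in (0:ℝ)..t₀, a' t = a t₀ - a 0 :=
    intervalIntegral.integral_eq_sub_of_hasDeriv_right_of_le ht₀ hca
      (fun t ht => ((ha t (Set.Ioo_subset_Icc_self ht)).hasDerivAt
        (Icc_mem_nhds ht.1 ht.2)).hasDerivWithinAt) hInta'
  have hfb : ∫ t in (0:ℝ)..t₀, b' t = b t₀ - b 0 :=
    intervalIntegral.integral_eq_sub_of_hasDeriv_right_of_le ht₀ hcb
      (fun t ht => ((hb t (Set.Ioo_subset_Icc_self ht)).hasDerivAt
        (Icc_mem_nhds ht.1 ht.2)).hasDerivWithinAt) hIntb'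
  have hcon1 : ContinuousOn (fun t => α (p t) (a' t)) (Set.Icc 0 t₀) :=
    (hαc.comp_continuousOn hcp).clm_apply ha'
  have hcon2 : ContinuousOn (fun t => α (p 0) (a' t)) (Set.Icc 0 t₀) :=
    ((α (p 0)).continuous.comp_continuousOn ha')
  have hInt1 : IntervalIntegrable (fun t => α (p t) (a' t)) MeasureTheory.volume 0 t₀ :=
    (hIcc ▸ hcon1).intervalIntegrable
  have hInt2 : IntervalIntegrable (fun t => α (p 0) (a' t)) MeasureTheory.volume 0 t₀ :=
    (hIcc ▸ hcon2).intervalIntegrable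
  have key : b t₀ - b 0 = ∫ t in (0:ℝ)..t₀, (α (p t) - α (p 0)) (a' t) := by
    have h0 : ∫ t in (0:ℝ)..t₀, α (p 0) (a' t) = α (p 0) (a t₀ - a 0) := by
      rw [(α (p 0)).intervalIntegral_comp_comm hInta', hfa]
    have hsplit : (∫ t in (0:ℝ)..t₀, (α (p t) - α (p 0)) (a' t))
        = (∫ t in (0:ℝ)..t₀, α (p t) (a' t)) - ∫ t in (0:ℝ)..t₀, α (p 0) (a' t) := by
      rw [← intervalIntegral.integral_sub hInt1 hInt2]
      simp [ContinuousLinearMap.sub_apply]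
    have hb'eq : (∫ t in (0:ℝ)..t₀, α (p t) (a' t)) = b t₀ - b 0 := by
      rw [← hfb]
      exact intervalIntegral.integral_congr (fun t ht => (hhor t (hIcc ▸ ht)).symm)
    rw [hsplit, h0, haper, sub_self, map_zero, sub_zero, hb'eq]
  have hconN : ContinuousOn (fun t => ‖(α (p t) - α (p 0)) (a' t)‖) (Set.Icc 0 t₀) := by
    apply ContinuousOn.norm
    exact ((hαc.comp_continuousOn hcp).sub continuousOn_const).clm_apply ha'
  have hconB : ContinuousOn (fun t => 2 * C * (‖p t - p 0‖ * ‖((a' t, b' t) : E₁ × E₂)‖))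
      (Set.Icc 0 t₀) :=
    continuousOn_const.mul (((hcp.sub continuousOn_const).norm).mul (ha'.prodMk hb').norm)
  have hIntN : IntervalIntegrable (fun t => ‖(α (p t) - α (p 0)) (a' t)‖) MeasureTheory.volume 0 t₀ :=
    (hIcc ▸ hconN).intervalIntegrable
  have hIntB : IntervalIntegrable (fun t => 2 * C * (‖p t - p 0‖ * ‖((a' t, b' t) : E₁ × E₂)‖))
      MeasureTheory.volume 0 t₀ := (hIcc ▸ hconB).intervalIntegrable
  rw [key]
  calc ‖∫ t in (0:ℝ)..t₀, (α (p t) - α (p 0)) (a' t)‖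
      ≤ ∫ t in (0:ℝ)..t₀, ‖(α (p t) - α (p 0)) (a' t)‖ :=
        intervalIntegral.norm_integral_le_integral_norm ht₀
    _ ≤ ∫ t in (0:ℝ)..t₀, 2 * C * (‖p t - p 0‖ * ‖((a' t, b' t) : E₁ × E₂)‖) := by
        apply intervalIntegral.integral_mono_on ht₀ hIntN hIntB
        intro t ht
        have h1 := (α (p t) - α (p 0)).le_opNorm (a' t)
        have h2 := hlip t ht
        have h3 : ‖a' t‖ ≤ ‖((a' t, b' t) : E₁ × E₂)‖ := norm_fst_le ((a' t, b' t) : E₁ × E₂)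
        nlinarith [norm_nonneg (p t - p 0), norm_nonneg (a' t),
          norm_nonneg ((a' t, b' t) : E₁ × E₂), norm_nonneg (α (p t) - α (p 0))]
    _ = 2 * C * ∫ t in (0:ℝ)..t₀, ‖p t - p 0‖ * ‖((a' t, b' t) : E₁ × E₂)‖ :=
        intervalIntegral.integral_const_mul _ _
end

section
/- Let E₁ and E₂ be finite-dimensional real normed vector spaces, let α : E₁ × E₂ → L(E₁, E₂) be a continuously differentiable map into the space of continuous linear maps from E₁ to E₂, let K ⊆ E₁ × E₂ be a convex set, and let C ≥ 0 be such that the operator norm of the derivative Dα(p) is at most C for every p ∈ K (where E₁ × E₂ carries the supremum norm ‖(v₁,v₂)‖ = max(‖v₁‖,‖v₂‖)). Let t₀ ≥ 0 and let a : [0, t₀] → E₁ and b : [0, t₀] → E₂ be continuously differentiable maps such that (a(t), b(t)) ∈ K for all t ∈ [0, t₀], a(t₀) = a(0), and b'(t) = α(a(t), b(t))(a'(t)) for every t ∈ [0, t₀]. Then, writing ℓ := ∫₀^{t₀} ‖(a'(t), b'(t))‖ dt for the length of the curve t ↦ (a(t), b(t)), we have ‖b(t₀) − b(0)‖ ≤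 2C · ℓ². -/
open Set intervalIntegral

/-- FTC on a subinterval of `[0, t₀]` from derivatives within `Icc 0 t₀`. -/
lemma ftc_aux {E : Type*} [NormedAddCommGroup E] [NormedSpace ℝ E] [CompleteSpace E]
    {t₀ : ℝ} (F F' : ℝ → E)
    (hF : ∀ t ∈ Set.Icc (0 : ℝ) t₀, HasDerivWithinAt F (F' t) (Set.Icc (0 : ℝ) t₀) t)
    (hF' : ContinuousOn F' (Set.Icc (0 : ℝ) t₀)) {s : ℝ} (hs : s ∈ Set.Icc (0 : ℝ) t₀) :
    ∫ t in (0 : ℝ)..s, F' t = F s - F 0 := by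
  have hsub : Set.Icc (0 : ℝ) s ⊆ Set.Icc (0 : ℝ) t₀ := Set.Icc_subset_Icc le_rfl hs.2
  apply intervalIntegral.integral_eq_sub_of_hasDeriv_right_of_le hs.1
  · exact fun t ht => ((hF t (hsub ht)).continuousWithinAt).mono hsub
  · intro t ht
    exact (hF t (hsub (Set.Ioo_subset_Icc_self ht))).mono_of_mem_nhdsWithin
      (Icc_mem_nhdsGT_of_mem ⟨le_of_lt ht.1, lt_of_lt_of_le ht.2 hs.2⟩)
  · rw [intervalIntegrable_iff_integrableOn_Icc_of_le hs.1]
    exact (hF'.mono hsub).integrableOn_compact isCompact_Icc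

/-- Quadratic-in-length bound for the vertical displacement of a curve tangent to a
horizontal distribution: under the hypotheses of the chart estimate, with
`ℓ = ∫₀^{t₀} ‖(a'(t), b'(t))‖ dt` the length of the curve `(a, b)`, one has
`‖b(t₀) − b(0)‖ ≤ 2C ℓ²`. -/
theorem stmt13 {E₁ : Type*} [NormedAddCommGroup E₁] [NormedSpace ℝ E₁] [FiniteDimensional ℝ E₁]
    {E₂ : Type*} [NormedAddCommGroup E₂] [NormedSpace ℝ E₂] [FiniteDimensional ℝ E₂]
    (α : E₁ × E₂ → (E₁ →L[ℝ] E₂)) (hα : ContDiff ℝ 1 α)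
    (K : Set (E₁ × E₂)) (hK : Convex ℝ K)
    (C : ℝ) (hC : 0 ≤ C) (hDα : ∀ p ∈ K, ‖fderiv ℝ α p‖ ≤ C)
    (t₀ : ℝ) (ht₀ : 0 ≤ t₀) (a : ℝ → E₁) (b : ℝ → E₂) (a' : ℝ → E₁) (b' : ℝ → E₂)
    (ha : ∀ t ∈ Set.Icc (0 : ℝ) t₀, HasDerivWithinAt a (a' t) (Set.Icc (0 : ℝ) t₀) t)
    (hb : ∀ t ∈ Set.Icc (0 : ℝ) t₀, HasDerivWithinAt b (b' t) (Set.Icc (0 : ℝ) t₀) t)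
    (ha' : ContinuousOn a' (Set.Icc (0 : ℝ) t₀))
    (hb' : ContinuousOn b' (Set.Icc (0 : ℝ) t₀))
    (hmem : ∀ t ∈ Set.Icc (0 : ℝ) t₀, (a t, b t) ∈ K)
    (haper : a t₀ = a 0)
    (hhor : ∀ t ∈ Set.Icc (0 : ℝ) t₀, b' t = α (a t, b t) (a' t)) :
    ‖b t₀ - b 0‖
      ≤ 2 * C * (∫ t in (0 : ℝ)..t₀, ‖((a' t, b' t) : E₁ × E₂)‖) ^ 2 := by
  set x : ℝ → E₁ × E₂ := fun t => (a t, b t) with hx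
  set x' : ℝ → E₁ × E₂ := fun t => (a' t, b' t) with hx'
  set ℓ : ℝ := ∫ t in (0 : ℝ)..t₀, ‖x' t‖ with hℓdef
  have ht₀mem : t₀ ∈ Set.Icc (0 : ℝ) t₀ := ⟨ht₀, le_rfl⟩
  have h0mem : (0 : ℝ) ∈ Set.Icc (0 : ℝ) t₀ := ⟨le_rfl, ht₀⟩
  have hxderiv : ∀ t ∈ Set.Icc (0 : ℝ) t₀,
      HasDerivWithinAt x (x' t) (Set.Icc (0 : ℝ) t₀) t :=
    fun t ht => (ha t ht).prodMk (hb t ht)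
  have hx'cont : ContinuousOn x' (Set.Icc (0 : ℝ) t₀) := ha'.prodMk hb'
  have hnorm_int : IntervalIntegrable (fun t => ‖x' t‖) MeasureTheory.volume 0 t₀ := by
    rw [intervalIntegrable_iff_integrableOn_Icc_of_le ht₀]
    exact hx'cont.norm.integrableOn_compact isCompact_Icc
  have hℓ0 : 0 ≤ ℓ :=
    intervalIntegral.integral_nonneg ht₀ (fun t _ => norm_nonneg _)
  -- the curve stays within distance ℓ of its start
  have hdist : ∀ t ∈ Set.Icc (0 : ℝ) t₀, ‖x t - x 0‖ ≤ ℓ := by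
    intro t ht
    have := ftc_aux x x' hxderiv hx'cont ht
    rw [← this]
    calc ‖∫ s in (0:ℝ)..t, x' s‖ ≤ ∫ s in (0:ℝ)..t, ‖x' s‖ :=
          intervalIntegral.norm_integral_le_integral_norm ht.1
      _ ≤ ℓ := by
          apply intervalIntegral.integral_mono_interval le_rfl ht.1 ht.2
          · filter_upwards with s using norm_nonneg _
          · exact hnorm_int
  -- Lipschitz bound for α on K
  have hlip : ∀ q ∈ K, ∀ p ∈ K, ‖α q - α p‖ ≤ C * ‖q - p‖ := fun q hq p hp =>
    hK.norm_image_sub_le_of_norm_fderiv_le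
      (fun r _ => (hα.differentiable one_ne_zero).differentiableAt) hDα hp hq
  set p₀ : E₁ × E₂ := (a 0, b 0) with hp₀
  have hp₀K : p₀ ∈ K := hmem 0 h0mem
  -- integrability facts
  have ha'int : IntervalIntegrable a' MeasureTheory.volume 0 t₀ := by
    rw [intervalIntegrable_iff_integrableOn_Icc_of_le ht₀]
    exact ha'.integrableOn_compact isCompact_Icc
  have hb'int : IntervalIntegrable b' MeasureTheory.volume 0 t₀ := by
    rw [intervalIntegrable_iff_integrableOn_Icc_of_le ht₀]
    exact hb'.integrableOn_compact isCompact_Icc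
  have hαa'int : IntervalIntegrable (fun t => (α p₀) (a' t)) MeasureTheory.volume 0 t₀ := by
    rw [intervalIntegrable_iff_integrableOn_Icc_of_le ht₀]
    exact ((α p₀).continuous.comp_continuousOn ha').integrableOn_compact isCompact_Icc
  -- FTC for a and b
  have hbft : ∫ t in (0:ℝ)..t₀, b' t = b t₀ - b 0 := ftc_aux b b' hb hb' ht₀mem
  have haft : ∫ t in (0:ℝ)..t₀, a' t = a t₀ - a 0 := ftc_aux a a' ha ha' ht₀mem
  have hαzero : ∫ t in (0:ℝ)..t₀, (α p₀) (a' t) = 0 := by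
    rw [(α p₀).intervalIntegral_comp_comm ha'int, haft, haper, sub_self, map_zero]
  have hkey : b t₀ - b 0 = ∫ t in (0:ℝ)..t₀, (b' t - (α p₀) (a' t)) := by
    rw [intervalIntegral.integral_sub hb'int hαa'int, hbft, hαzero, sub_zero]
  -- pointwise bound
  have hpt : ∀ t ∈ Set.Icc (0:ℝ) t₀, ‖b' t - (α p₀) (a' t)‖ ≤ C * ℓ * ‖x' t‖ := by
    intro t ht
    have h1 : b' t - (α p₀) (a' t) = (α (x t) - α p₀) (a' t) := by
      rw [ContinuousLinearMap.sub_apply, hhor t ht]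
    rw [h1]
    calc ‖(α (x t) - α p₀) (a' t)‖ ≤ ‖α (x t) - α p₀‖ * ‖a' t‖ :=
          (α (x t) - α p₀).le_opNorm _
      _ ≤ (C * ‖x t - p₀‖) * ‖a' t‖ :=
          mul_le_mul_of_nonneg_right (hlip _ (hmem t ht) _ hp₀K) (norm_nonneg _)
      _ ≤ (C * ℓ) * ‖x' t‖ := by
          apply mul_le_mul
          · exact mul_le_mul_of_nonneg_left (hdist t ht) hC
          · exact norm_fst_le (x' t)
          · exact norm_nonneg _
          · positivity
  -- conclude
  have hsubint : IntervalIntegrable (fun t => b' t - (α p₀) (a' t)) MeasureTheory.volume 0 t₀ :=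
    hb'int.sub hαa'int
  have hconstint : IntervalIntegrable (fun t => C * ℓ * ‖x' t‖) MeasureTheory.volume 0 t₀ :=
    hnorm_int.const_mul _
  have hmain : ‖b t₀ - b 0‖ ≤ C * ℓ * ℓ := by
    rw [hkey]
    calc ‖∫ t in (0:ℝ)..t₀, (b' t - (α p₀) (a' t))‖
        ≤ ∫ t in (0:ℝ)..t₀, ‖b' t - (α p₀) (a' t)‖ :=
          intervalIntegral.norm_integral_le_integral_norm ht₀
      _ ≤ ∫ t in (0:ℝ)..t₀, C * ℓ * ‖x' t‖ := by
          apply intervalIntegral.integral_mono_on ht₀ hsubint.norm hconstint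
          exact hpt
      _ = C * ℓ * ℓ := by rw [intervalIntegral.integral_const_mul]
  calc ‖b t₀ - b 0‖ ≤ C * ℓ * ℓ := hmain
    _ ≤ 2 * C * ℓ ^ 2 := by nlinarith
end
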